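/- arXiv:1804.00865 — 5 statements merged into one kernel-verified Lean document; each statement's English description precedes it below -/
import Mathlib

section
/- For all positive real numbers a, b and all real t, |a + b·e^{2πit}| ≤ a + b − 4·min(a,b)·‖t‖², where ‖t‖ denotes the distance from t to the nearest integer. -/
/-!
Expanding the square gives `|a + b e(t)|² = (a + b)² - 4ab sin²(πt)`, and Jordan's inequality
`sin x ≥ 2x/π` on `[0, π/2]`, applied after reducing `t` to `t - round t ∈ [-1/2, 1/2]`, gives
`sin²(πt) ≥ 4‖t‖²`. It remains to check that `(a + b)² - 16ab‖t‖² ≤ (a + b - 4 min(a, b)‖t‖²)²`,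
which for `a ≤ b` is `0 ≤ 8a‖t‖²(b - a) + 16a²‖t‖⁴`.
-/

open Real

theorem norm_ofReal_add_mul_exp_mul_I_sq (a b θ : ℝ) :
    ‖(a : ℂ) + b * Complex.exp (θ * Complex.I)‖ ^ 2 =
      (a + b) ^ 2 - 4 * a * b * sin (θ / 2) ^ 2 := by
  have hcos : cos θ = 1 - 2 * sin (θ / 2) ^ 2 := by
    rw [← cos_two_mul_eq_one_sub, mul_div_cancel₀ θ two_ne_zero]
  rw [Complex.sq_norm, Complex.normSq_apply]
  simp only [Complex.add_re, Complex.add_im, Complex.mul_re, Complex.mul_im, Complex.ofReal_re,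
    Complex.ofReal_im, Complex.exp_ofReal_mul_I_re, Complex.exp_ofReal_mul_I_im]
  linear_combination b ^ 2 * sin_sq_add_cos_sq θ + 2 * a * b * hcos

theorem two_mul_abs_sub_round_le_abs_sin_pi_mul (t : ℝ) :
    2 * |t - round t| ≤ |sin (π * t)| := by
  set u := t - round t
  have hu : |u| ≤ 1 / 2 := abs_sub_round t
  have hsin : |sin (π * t)| = sin (π * |u|) := by
    rw [show π * t = π * u + round t * π by ring, sin_add_int_mul_pi, abs_mul, abs_neg_one_zpow,
      one_mul, abs_sin_eq_sin_abs_of_abs_le_pi, abs_mul, abs_of_pos pi_pos]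
    rw [abs_mul, abs_of_pos pi_pos]
    nlinarith [pi_pos]
  rw [hsin]
  calc 2 * |u| = 2 / π * (π * |u|) := by field_simp
    _ ≤ sin (π * |u|) := mul_le_sin (by positivity) (by nlinarith [pi_pos])

theorem sq_add_sub_le_sq_add_sub_min_mul {a b x s : ℝ} (ha : 0 ≤ a) (hb : 0 ≤ b) (hx : 0 ≤ x)
    (hs : 4 * x ≤ s) : (a + b) ^ 2 - 4 * a * b * s ≤ (a + b - 4 * min a b * x) ^ 2 := by
  have hab : 4 * a * b * (4 * x) ≤ 4 * a * b * s := by gcongr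
  rcases min_cases a b with ⟨hm, hle⟩ | ⟨hm, hlt⟩ <;> rw [hm]
  · nlinarith [mul_nonneg (mul_nonneg ha hx) (sub_nonneg.2 hle), sq_nonneg (a * x)]
  · nlinarith [mul_nonneg (mul_nonneg hb hx) (sub_nonneg.2 hlt.le), sq_nonneg (b * x)]

theorem coin_abs_bound (a b t : ℝ) (ha : 0 < a) (hb : 0 < b) :
    ‖(a : ℂ) + (b : ℂ) * Complex.exp (2 * (π : ℂ) * Complex.I * (t : ℂ))‖
      ≤ a + b - 4 * min a b * |t - round t| ^ 2 := by
  have hdist : |t - round t| ^ 2 ≤ 1 / 4 := by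
    nlinarith [abs_sub_round t, abs_nonneg (t - round t)]
  have hrhs : 0 ≤ a + b - 4 * min a b * |t - round t| ^ 2 := by
    nlinarith [min_le_left a b, lt_min ha hb]
  have hsin : 4 * |t - round t| ^ 2 ≤ sin (π * t) ^ 2 := by
    nlinarith [two_mul_abs_sub_round_le_abs_sin_pi_mul t, abs_nonneg (t - round t),
      sq_abs (sin (π * t))]
  refine le_of_pow_le_pow_left₀ two_ne_zero hrhs ?_
  rw [show 2 * (π : ℂ) * Complex.I * t = ((2 * π * t : ℝ) : ℂ) * Complex.I by push_cast; ring,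
    norm_ofReal_add_mul_exp_mul_I_sq, show 2 * π * t / 2 = π * t by ring]
  exact sq_add_sub_le_sq_add_sub_min_mul ha.le hb.le (sq_nonneg _) hsin
end

section
/- Let a ≥ 3 be an integer. Then the infinite product ∏_{n=1}^{∞} cos²(π·a^{−n}) satisfies ∏_{n=1}^{∞} cos²(π·a^{−n}) ≥ (4/π²)·cos²(π/a) > 0. -/
/-! The doubling formula telescopes to
`sin x = 2 ^ m * sin (x / 2 ^ m) * ∏ k < m, cos (x / 2 ^ (k + 1))`; at `x = π / 2`, together with
`sin y ≤ y`, it gives `2 / π ≤ ∏ k < m, cos (π / 2 ^ (k + 2))`. As `2 ^ n ≤ a ^ n` and `cos`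
decreases on `[0, π / 2]`, every partial product is then at least `(4 / π ^ 2) * cos (π / a) ^ 2`.
The product converges because `1 - cos y ^ 2 = sin y ^ 2 ≤ y ^ 2` is summable along
`y = π / a ^ (n + 1)`. -/

open Real Finset

theorem sin_eq_two_pow_mul_sin_div_mul_prod_cos (x : ℝ) (m : ℕ) :
    sin x = 2 ^ m * sin (x / 2 ^ m) * ∏ k ∈ range m, cos (x / 2 ^ (k + 1)) := by
  induction m with
  | zero => simp
  | succ m ih =>
    have halve : x / 2 ^ m = 2 * (x / 2 ^ (m + 1)) := by rw [pow_succ]; ring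
    rw [ih, halve, sin_two_mul, prod_range_succ]
    ring

theorem cos_pi_div_two_pow_succ_nonneg (k : ℕ) : 0 ≤ cos (π / 2 ^ (k + 1)) := by
  rw [cos_pi_over_two_pow]
  exact div_nonneg (sqrtTwoAddSeries_zero_nonneg k) zero_le_two

theorem two_div_pi_le_prod_cos_pi_div_two_pow (m : ℕ) :
    2 / π ≤ ∏ k ∈ range m, cos (π / 2 ^ (k + 2)) := by
  set P := ∏ k ∈ range m, cos (π / 2 ^ (k + 2))
  set y := π / 2 ^ (m + 1)
  have hy : 0 < y := by positivity
  have hsin : 1 = 2 ^ m * sin y * P := by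
    simpa only [sin_pi_div_two, div_div, ← pow_succ'] using
      sin_eq_two_pow_mul_sin_div_mul_prod_cos (π / 2) m
  have hbound : 2 ^ m * sin y ≤ π / 2 := by
    calc 2 ^ m * sin y ≤ 2 ^ m * y := by gcongr; exact sin_le hy.le
      _ = π / 2 := by simp only [y, pow_succ]; field_simp
  have hP : 0 ≤ P := prod_nonneg fun k _ ↦ cos_pi_div_two_pow_succ_nonneg (k + 1)
  rw [div_le_iff₀ pi_pos]
  nlinarith

theorem two_div_pi_le_prod_cos_pi_div_pow {a : ℝ} (ha : 2 ≤ a) (m : ℕ) :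
    2 / π ≤ ∏ k ∈ range m, cos (π / a ^ (k + 2)) := by
  refine (two_div_pi_le_prod_cos_pi_div_two_pow m).trans
    (prod_le_prod (fun k _ ↦ cos_pi_div_two_pow_succ_nonneg (k + 1)) fun k _ ↦ ?_)
  refine cos_le_cos_of_nonneg_of_le_pi (by positivity)
    (div_le_self pi_pos.le (one_le_pow₀ one_le_two)) ?_
  gcongr

theorem summable_sq_div_pow {a : ℝ} (ha : 1 < a) (x : ℝ) :
    Summable fun n : ℕ ↦ (x / a ^ (n + 1)) ^ 2 := by
  have hr : (a ^ 2)⁻¹ < 1 := inv_lt_one_of_one_lt₀ (one_lt_pow₀ ha two_ne_zero)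
  refine ((summable_geometric_of_lt_one (by positivity) hr).mul_left ((x / a) ^ 2)).congr
    fun n ↦ ?_
  have ha0 : a ≠ 0 := by positivity
  rw [inv_pow, ← pow_mul, pow_succ]
  field_simp
  ring

theorem multipliable_cos_sq_of_summable_sq {y : ℕ → ℝ} (h : Summable fun n ↦ y n ^ 2) :
    Multipliable fun n ↦ cos (y n) ^ 2 := by
  have hsin : Summable fun n ↦ -sin (y n) ^ 2 :=
    (h.of_nonneg_of_le (fun n ↦ sq_nonneg _) fun n ↦ sin_sq_le_sq).neg
  simpa only [cos_sq', sub_eq_add_neg] using Real.multipliable_one_add_of_summable hsin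

theorem four_div_pi_sq_mul_cos_sq_le_prod_cos_sq {a : ℝ} (ha : 2 ≤ a) (N : ℕ) :
    4 / π ^ 2 * cos (π / a) ^ 2 ≤ ∏ n ∈ range N, cos (π / a ^ (n + 1)) ^ 2 := by
  cases N with
  | zero =>
    have hle : 4 / π ^ 2 ≤ 1 := by
      rw [div_le_one (by positivity)]
      nlinarith [pi_gt_three]
    simpa using mul_le_one₀ hle (sq_nonneg _) (cos_sq_le_one _)
  | succ N =>
    have hN : 4 / π ^ 2 ≤ ∏ n ∈ range N, cos (π / a ^ (n + 2)) ^ 2 := by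
      rw [prod_pow, show 4 / π ^ 2 = (2 / π) ^ 2 by ring]
      gcongr
      exact two_div_pi_le_prod_cos_pi_div_pow ha N
    rw [prod_range_succ', zero_add, pow_one]
    exact mul_le_mul_of_nonneg_right hN (sq_nonneg _)

theorem prod_cos_sq_pos (a : ℕ) (ha : 3 ≤ a) :
    (4 / π ^ 2) * Real.cos (π / a) ^ 2 ≤ (∏' n : ℕ, Real.cos (π / (a : ℝ) ^ (n + 1)) ^ 2) ∧
      0 < (4 / π ^ 2) * Real.cos (π / a) ^ 2 := by
  have ha' : (3 : ℝ) ≤ a := by exact_mod_cast ha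
  have hmul : Multipliable fun n : ℕ ↦ cos (π / (a : ℝ) ^ (n + 1)) ^ 2 :=
    multipliable_cos_sq_of_summable_sq (summable_sq_div_pow (by linarith) π)
  refine ⟨ge_of_tendsto' hmul.hasProd.tendsto_prod_nat
    (four_div_pi_sq_mul_cos_sq_le_prod_cos_sq (by linarith)), ?_⟩
  have hcos : 0 < cos (π / a) := cos_pos_of_mem_Ioo
    ⟨by linarith [pi_pos, show 0 < π / a by positivity],
     div_lt_div_of_pos_left pi_pos two_pos (by linarith)⟩
  positivity
end

section
/- Fix K ≥ 2 (so that 3·2^{−K} ≤ 1). Let t > 0 be real, and suppose n and l ≥ 1 are positive integers with n > l such that ‖2^{−(n−j)}t‖ < 2^{−K} for all j = 1, 2, …, l, while ‖2^{−n}t‖ ≥ 2^{−K}. Then there exists an odd integer k such that |2^{−n}t − k/2| < 2^{−K−l}. -/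
lemma my_round_eq_of {x : ℝ} {m : ℤ} (h : |x - m| < 1/2) : round x = m := by
  rw [round_eq, Int.floor_eq_iff]
  rw [abs_lt] at h
  push_cast
  constructor <;> linarith [h.1, h.2]

lemma my_inv_pow_add (a b : ℕ) : ((2:ℝ) ^ (a + b))⁻¹ * 2 ^ b = ((2:ℝ) ^ a)⁻¹ := by
  rw [pow_add, mul_inv, mul_assoc, inv_mul_cancel₀ (by positivity), mul_one]

theorem key_combinatorial_lemma (K : ℕ) (hK : 2 ≤ K) (t : ℝ) (ht : 0 < t)
    (n l : ℕ) (hl : 1 ≤ l) (hln : l < n)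
    (hgood : ∀ j : ℕ, 1 ≤ j → j ≤ l →
      |t / 2 ^ (n - j) - round (t / 2 ^ (n - j))| < ((2 : ℝ) ^ K)⁻¹)
    (hbad : ((2 : ℝ) ^ K)⁻¹ ≤ |t / 2 ^ n - round (t / 2 ^ n)|) :
    ∃ k : ℤ, Odd k ∧ |t / 2 ^ n - (k : ℝ) / 2| < ((2 : ℝ) ^ (K + l))⁻¹ := by
  set x : ℕ → ℝ := fun j => t / 2 ^ (n - j) with hxdef
  have hKsmall : ((2:ℝ)^K)⁻¹ ≤ 1/4 := by
    rw [show (1:ℝ)/4 = ((2:ℝ)^2)⁻¹ by norm_num]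
    exact inv_anti₀ (by positivity) (pow_le_pow_right₀ one_le_two hK)
  have hstep : ∀ j, j + 1 ≤ n → x (j+1) = 2 * x j := by
    intro j hj
    have h : n - j = (n - (j+1)) + 1 := by omega
    simp only [hxdef, h, pow_succ]
    ring
  have key : ∀ j, 1 ≤ j → j ≤ l →
      |x l - round (x l)| = 2 ^ (l - j) * |x j - round (x j)| := by
    intro j h1 h2
    induction l with
    | zero => omega
    | succ m ih =>
      rcases Nat.eq_or_lt_of_le h2 with h | h
      · subst h; simp
      · have hm1 : 1 ≤ m := by omega
        have hjm : j ≤ m := by omega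
        have hrec := ih hm1 (by omega) (fun j hj1 hj2 => hgood j hj1 (by omega)) hjm
        have hxm : x (m+1) = 2 * x m := hstep m (by omega)
        have hsm := hgood m hm1 (by omega)
        have heq : x (m+1) - ((2 * round (x m) : ℤ) : ℝ) = 2 * (x m - round (x m)) := by
          rw [hxm]; push_cast; ring
        have hround : round (x (m+1)) = 2 * round (x m) := by
          apply my_round_eq_of
          rw [heq, abs_mul, abs_two]
          calc 2 * |x m - round (x m)| < 2 * ((2:ℝ)^K)⁻¹ := by linarith [hsm]
          _ ≤ 2 * (1/4) := by linarith
          _ = 1/2 := by norm_num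
        have habs : |x (m+1) - round (x (m+1))| = 2 * |x m - round (x m)| := by
          rw [hround, heq, abs_mul, abs_two]
        rw [habs, hrec, show m + 1 - j = (m - j) + 1 by omega, pow_succ]
        ring
  have key1 := key 1 le_rfl hl
  have hgl := hgood l hl le_rfl
  have h1small : |x 1 - round (x 1)| < ((2:ℝ)^(K + l - 1))⁻¹ := by
    have hpow : (0:ℝ) < 2 ^ (l - 1) := by positivity
    have h2 : 2 ^ (l-1) * |x 1 - round (x 1)| < ((2:ℝ)^K)⁻¹ := key1 ▸ hgl
    have hsplit : ((2:ℝ)^(K + l - 1))⁻¹ = ((2:ℝ)^K)⁻¹ / 2^(l-1) := by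
      rw [eq_div_iff hpow.ne', show K + l - 1 = K + (l-1) by omega]
      exact my_inv_pow_add K (l-1)
    rw [hsplit, lt_div_iff₀ hpow]
    linarith [h2]
  have hhalf : ((2:ℝ)^(K+l-1))⁻¹ / 2 = ((2:ℝ)^(K+l))⁻¹ := by
    obtain ⟨m, h1, h2⟩ : ∃ m, K + l - 1 = m ∧ K + l = m + 1 := ⟨K + l - 1, rfl, by omega⟩
    rw [h1, h2, pow_succ, mul_inv, div_eq_mul_inv]
  refine ⟨round (x 1), ?_, ?_⟩
  · by_contra hodd
    rw [Int.not_odd_iff_even] at hodd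
    obtain ⟨m, hm⟩ := hodd
    have hx0 : x 0 = x 1 / 2 := by
      have := hstep 0 (by omega); rw [this]; ring
    have hclose : |x 0 - (m : ℝ)| < ((2:ℝ)^K)⁻¹ := by
      have heq : x 0 - (m:ℝ) = (x 1 - round (x 1)) / 2 := by
        rw [hx0, hm]; push_cast; ring
      rw [heq, abs_div, abs_two]
      calc |x 1 - round (x 1)| / 2 < ((2:ℝ)^(K+l-1))⁻¹ / 2 := by linarith
      _ = ((2:ℝ)^(K+l))⁻¹ := hhalf
      _ ≤ ((2:ℝ)^K)⁻¹ := by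
        exact inv_anti₀ (by positivity) (pow_le_pow_right₀ one_le_two (by omega))
    have hx0n : x 0 = t / 2 ^ n := by simp [hxdef]
    rw [hx0n] at hclose
    have := round_le (t / 2^n) m
    linarith [hbad, this, hclose]
  · have hx0 : t / 2^n = x 1 / 2 := by
      have h0 := hstep 0 (by omega)
      have : x 0 = t / 2 ^ n := by simp [hxdef]
      rw [← this, h0]; ring
    rw [hx0]
    have heq : x 1 / 2 - (round (x 1) : ℝ) / 2 = (x 1 - round (x 1)) / 2 := by ring
    rw [heq, abs_div, abs_two]
    calc |x 1 - round (x 1)| / 2 < ((2:ℝ)^(K+l-1))⁻¹ / 2 := by linarith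
    _ = ((2:ℝ)^(K+l))⁻¹ := hhalf
end

section
/- Let φ: ℕ → (0,1) be non-increasing with φ(n)/φ(n+1) < 2 for all n, and let l_1, …, l_j be positive integers with sum k. Assume K is large enough that φ²(2) + π²·4^{−1−K} + π²·4^{−K} ≤ 1 and π·2^{−K} ≤ 1. Then ∏_{i=1}^{j} (φ²(1 + l_1 + ⋯ + l_i) + π²·2^{−2(l_i + K)}) ≤ φ²(1 + k) + π²·2^{−2(k + K)}. -/
/-!
Put `x = π² / 4 ^ K` and `F t = φ(1 + t)² + x / 4 ^ t`, so that the right-hand side is `F k` and the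
`i`-th factor is `φ(1 + l₁ + ⋯ + lᵢ)² + x / 4 ^ lᵢ`. Multiplying the partial products one factor at a
time, it suffices that `F m · (φ(1 + m + l)² + x / 4 ^ l) ≤ F (m + l)` for `m ≥ 1`. In the expansion of
the left side, the doubling hypothesis gives `φ(1 + m)² ≤ 4 ^ l φ(1 + m + l)²`, which absorbs the cross
term `φ(1 + m)² · x / 4 ^ l` into `x φ(1 + m + l)²`; monotonicity bounds `φ(1 + m)` by `φ 2`, and the
choice of `K` makes the coefficient of `φ(1 + m + l)²` at most `φ(2)² + x / 4 + x ≤ 1`.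
-/

open Real Finset

lemma le_pow_mul_add_of_le_mul_succ {f : ℕ → ℝ} {c : ℝ} (hc : 0 ≤ c)
    (hf : ∀ n, f n ≤ c * f (n + 1)) (n t : ℕ) : f n ≤ c ^ t * f (n + t) := by
  induction t with
  | zero => simp
  | succ t ih =>
    calc f n ≤ c ^ t * f (n + t) := ih
      _ ≤ c ^ t * (c * f (n + t + 1)) := by gcongr; exact hf _
      _ = c ^ (t + 1) * f (n + (t + 1)) := by ring_nf

lemma add_div_mul_add_div_le {a b c x P Q : ℝ} (ha : 0 ≤ a) (hb : 0 ≤ b) (hx : 0 ≤ x)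
    (hP : 4 ≤ P) (hQ : 0 < Q) (hab : a ≤ Q * b) (hac : a ≤ c) (hcx : c + x / 4 + x ≤ 1) :
    (a + x / P) * (b + x / Q) ≤ b + x / (P * Q) := by
  have hx1 : x ≤ 1 := by linarith
  have hPQ : 0 < P * Q := by positivity
  have cross : a * (x / Q) ≤ b * x := by
    calc a * (x / Q) ≤ Q * b * (x / Q) := by gcongr
      _ = b * x := by field_simp
  have leading : a * b ≤ c * b := by gcongr
  have tail : x / P * b ≤ x / 4 * b := by gcongr
  have square : x * x / (P * Q) ≤ x / (P * Q) := by
    gcongr; exact mul_le_of_le_one_left hx hx1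
  have budget : b * (c + x / 4 + x) ≤ b := mul_le_of_le_one_right hb hcx
  calc (a + x / P) * (b + x / Q)
        = a * b + a * (x / Q) + x / P * b + x * x / (P * Q) := by
          field_simp; ring
    _ ≤ b * (c + x / 4 + x) + x / (P * Q) := by linarith
    _ ≤ b + x / (P * Q) := by linarith

lemma prod_add_div_four_pow_le {g : ℕ → ℝ} (hg : ∀ n, 0 ≤ g n) (hanti : Antitone g)
    (hdouble : ∀ n, g n ≤ 4 * g (n + 1)) {x : ℝ} (hx : 0 ≤ x) (hgx : g 1 + x / 4 + x ≤ 1)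
    (l : ℕ → ℕ) (hl : 1 ≤ l 0) {j : ℕ} (hj : 1 ≤ j) :
    ∏ i ∈ range j, (g (∑ s ∈ range (i + 1), l s) + x / 4 ^ l i)
      ≤ g (∑ s ∈ range j, l s) + x / 4 ^ (∑ s ∈ range j, l s) := by
  induction j, hj using Nat.le_induction with
  | base => simp
  | succ n hn ih =>
    set m := ∑ s ∈ range n, l s
    have hm : 1 ≤ m := hl.trans (single_le_sum (fun _ _ ↦ Nat.zero_le _) (mem_range.mpr hn))
    have hP : (4 : ℝ) ≤ 4 ^ m := le_self_pow₀ (by norm_num) (by omega)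
    rw [prod_range_succ, sum_range_succ, pow_add]
    calc _ ≤ (g m + x / 4 ^ m) * (g (m + l n) + x / 4 ^ l n) := by
          gcongr
          have := hg (m + l n); positivity
      _ ≤ _ := add_div_mul_add_div_le (hg _) (hg _) hx hP (by positivity)
          (le_pow_mul_add_of_le_mul_succ (by norm_num) hdouble m (l n)) (hanti hm) hgx

lemma pi_sq_div_two_pow (t K : ℕ) : π ^ 2 / 2 ^ (2 * (t + K)) = π ^ 2 / 4 ^ K / 4 ^ t := by
  rw [div_div, pow_mul, ← pow_add, add_comm]
  norm_num

theorem product_induction_slow_decay_general (φ : ℕ → ℝ) (hφ : ∀ n, 0 < φ n ∧ φ n < 1)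
    (hanti : ∀ n, φ (n + 1) ≤ φ n) (hdouble : ∀ n, φ n < 2 * φ (n + 1))
    (K : ℕ)
    (hK1 : φ 2 ^ 2 + π ^ 2 / 4 ^ (1 + K) + π ^ 2 / 4 ^ K ≤ 1)
    (j : ℕ) (hj : 1 ≤ j) (l : ℕ → ℕ) (hl : ∀ i < j, 1 ≤ l i)
    (k : ℕ) (hk : k = ∑ s ∈ Finset.range j, l s) :
    ∏ i ∈ Finset.range j,
        (φ (1 + ∑ s ∈ Finset.range (i + 1), l s) ^ 2 + π ^ 2 / 2 ^ (2 * (l i + K)))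
      ≤ φ (1 + k) ^ 2 + π ^ 2 / 2 ^ (2 * (k + K)) := by
  subst hk
  have hsq_double (n : ℕ) : φ (1 + n) ^ 2 ≤ 4 * φ (1 + (n + 1)) ^ 2 := by
    have hpos := (hφ (1 + n)).1
    have h := hdouble (1 + n)
    rw [add_assoc] at h
    nlinarith
  have hsq_anti : Antitone fun n ↦ φ (1 + n) ^ 2 := fun m n hmn ↦
    pow_le_pow_left₀ (hφ _).1.le (antitone_nat_of_succ_le hanti (by omega)) 2
  have hK : φ (1 + 1) ^ 2 + π ^ 2 / 4 ^ K / 4 + π ^ 2 / 4 ^ K ≤ 1 := by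
    rwa [pow_add, pow_one, mul_comm, ← div_div] at hK1
  simp only [pi_sq_div_two_pow]
  exact prod_add_div_four_pow_le (fun _ ↦ sq_nonneg _) hsq_anti hsq_double (by positivity) hK l
    (hl 0 hj) hj

theorem product_induction_slow_decay (φ : ℕ → ℝ) (hφ : ∀ n, 0 < φ n ∧ φ n < 1)
    (hanti : ∀ n, φ (n + 1) ≤ φ n) (hdouble : ∀ n, φ n < 2 * φ (n + 1))
    (K : ℕ)
    (hK1 : φ 2 ^ 2 + π ^ 2 / 4 ^ (1 + K) + π ^ 2 / 4 ^ K ≤ 1)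
    (hK2 : π / 2 ^ K ≤ 1)
    (j : ℕ) (hj : 1 ≤ j) (l : ℕ → ℕ) (hl : ∀ i < j, 1 ≤ l i)
    (k : ℕ) (hk : k = ∑ s ∈ Finset.range j, l s) :
    ∏ i ∈ Finset.range j,
        (φ (1 + ∑ s ∈ Finset.range (i + 1), l s) ^ 2 + π ^ 2 / 2 ^ (2 * (l i + K)))
      ≤ φ (1 + k) ^ 2 + π ^ 2 / 2 ^ (2 * (k + K)) :=
  product_induction_slow_decay_general φ hφ hanti hdouble K hK1 j hj l hl k hk
end

section
/- Let φ: ℕ → (0,1) be non-increasing with φ(n)/φ(n+1) ≥ 2 for all n, and let l_1, …, l_j be positive integers with sum k. Set K = 3. Then ∏_{i=1}^{j} (φ²(1 + l_1 + ⋯ + l_i) + π²·2^{−2(l_i + K)}) ≤ 2^{−2k} + φ²(1 + k) ≤ (1 + φ²(1))·2^{−2k}. -/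
open Real Finset

lemma phi_decay_aux (φ : ℕ → ℝ)
    (hdouble : ∀ n, 2 * φ (n + 1) ≤ φ n) :
    ∀ a b : ℕ, 2 ^ b * φ (a + b) ≤ φ a := by
  intro a b
  induction b with
  | zero => simp
  | succ b ih =>
    have h := hdouble (a + b)
    have h2 : (0:ℝ) < 2 ^ b := by positivity
    calc (2:ℝ) ^ (b+1) * φ (a + (b+1)) = 2 ^ b * (2 * φ ((a + b) + 1)) := by
          rw [show a + (b+1) = (a+b)+1 from rfl]; ring
      _ ≤ 2 ^ b * φ (a + b) := by nlinarith
      _ ≤ φ a := ih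

lemma arith_step (a b x y p : ℝ) (hb0 : 0 < b) (hx0 : 0 < x) (hy0 : 0 < y)
    (hp0 : 0 < p) (hp : p ≤ 16) (hbay : b ≤ a * y) (hax : a ≤ x) (haq : a < 1/4) :
    (x + a) * (b + p * y / 64) ≤ x * y + b := by
  have e1 : x * b ≤ (1/4) * (x * y) := by
    nlinarith [mul_le_mul_of_nonneg_left hbay hx0.le, mul_pos hx0 hy0]
  have e2 : x * (p * y / 64) ≤ (1/4) * (x * y) := by
    nlinarith [mul_pos hx0 hy0]
  have e3 : a * b ≤ (1/4) * b := by nlinarith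
  have e4 : a * (p * y / 64) ≤ (1/4) * (x * y) := by
    have h5 : a * (p * y) ≤ x * (p * y) :=
      mul_le_mul_of_nonneg_right hax (by positivity)
    nlinarith [mul_pos hx0 hy0]
  nlinarith [e1, e2, e3, e4]

lemma product_induction_aux (φ : ℕ → ℝ) (hφ : ∀ n, 0 < φ n ∧ φ n < 1)
    (hdouble : ∀ n, 2 * φ (n + 1) ≤ φ n) :
    ∀ j : ℕ, 1 ≤ j → ∀ l : ℕ → ℕ, (∀ i < j, 1 ≤ l i) →
    ∏ i ∈ Finset.range j,
        (φ (1 + ∑ s ∈ Finset.range (i + 1), l s) ^ 2 + π ^ 2 / 2 ^ (2 * (l i + 3)))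
      ≤ ((2 : ℝ) ^ (2 * ∑ s ∈ Finset.range j, l s))⁻¹
        + φ (1 + ∑ s ∈ Finset.range j, l s) ^ 2 := by
  intro j hj
  induction j, hj using Nat.le_induction with
  | base =>
    intro l hl
    simp only [zero_add, Finset.prod_range_one, Finset.sum_range_one]
    have hpi : π ≤ 4 := by have := Real.pi_le_four; linarith
    have hpi0 : 0 < π := Real.pi_pos
    have h1 : (2:ℝ) ^ (2 * (l 0 + 3)) = 2 ^ (2 * l 0) * 64 := by
      rw [show 2 * (l 0 + 3) = 2 * l 0 + 6 by ring, pow_add]; norm_num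
    have h2 : (0:ℝ) < 2 ^ (2 * l 0) := by positivity
    have key : π ^ 2 / 2 ^ (2 * (l 0 + 3)) ≤ ((2:ℝ) ^ (2 * l 0))⁻¹ := by
      rw [h1]
      have h3 : ((2:ℝ) ^ (2 * l 0))⁻¹ * (2 ^ (2 * l 0) * 64) = 64 := by
        field_simp
      rw [div_le_iff₀ (by positivity), h3]
      nlinarith
    linarith
  | succ j hj ih =>
    intro l hl
    have hl' : ∀ i < j, 1 ≤ l i := fun i hi => hl i (by omega)
    have IH := ih l hl'
    rw [Finset.prod_range_succ, Finset.sum_range_succ]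
    set k' := ∑ s ∈ Finset.range j, l s with hk'
    set m := l j with hm
    have hm1 : 1 ≤ m := hl j (by omega)
    have hk'1 : 1 ≤ k' := by
      calc 1 ≤ l 0 := hl 0 (by omega)
        _ ≤ k' := Finset.single_le_sum (f := l) (fun i _ => Nat.zero_le _)
              (Finset.mem_range.mpr (by omega))
    have hpi : π ≤ 4 := by have := Real.pi_le_four; linarith
    have hpi0 : 0 < π := Real.pi_pos
    set a := φ (1 + k') ^ 2 with ha
    set b := φ (1 + (k' + m)) ^ 2 with hb
    set x := ((2:ℝ) ^ (2 * k'))⁻¹ with hx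
    set y := ((2:ℝ) ^ (2 * m))⁻¹ with hy
    have hx0 : 0 < x := by positivity
    have hy0 : 0 < y := by positivity
    have hφk' := hφ (1 + k')
    have hφk := hφ ((1 + k') + m)
    have ha0 : 0 < a := by have := hφk'.1; positivity
    have hb0 : 0 < b := by
      rw [hb, show 1 + (k' + m) = (1 + k') + m by ring]
      have := hφk.1; positivity
    have h2m : (0:ℝ) < (2:ℝ) ^ m := by positivity
    have h2m2 : ((2:ℝ) ^ m) ^ 2 = 2 ^ (2 * m) := by
      rw [← pow_mul]; ring_nf
    have h2k'2 : ((2:ℝ) ^ k') ^ 2 = 2 ^ (2 * k') := by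
      rw [← pow_mul]; ring_nf
    -- b ≤ a * y
    have hdecay : 2 ^ m * φ ((1 + k') + m) ≤ φ (1 + k') := phi_decay_aux φ hdouble _ _
    have hbay : b ≤ a * y := by
      have hsq : (2 ^ m * φ ((1 + k') + m)) ^ 2 ≤ φ (1 + k') ^ 2 :=
        pow_le_pow_left₀ (mul_nonneg (by positivity) (hφ _).1.le) hdecay 2
      have hsq' : 2 ^ (2 * m) * b ≤ a := by
        rw [hb, ha, show 1 + (k' + m) = (1 + k') + m by ring]
        calc 2 ^ (2 * m) * φ ((1 + k') + m) ^ 2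
            = (2 ^ m * φ ((1 + k') + m)) ^ 2 := by rw [mul_pow, h2m2]
          _ ≤ φ (1 + k') ^ 2 := hsq
      rw [hy, ← div_eq_mul_inv, le_div_iff₀ (by positivity)]
      linarith
    -- a ≤ x
    have hdecay1 : 2 ^ k' * φ (1 + k') ≤ φ 1 := by
      have := phi_decay_aux φ hdouble 1 k'
      linarith
    have hax : a ≤ x := by
      have hsq : (2 ^ k' * φ (1 + k')) ^ 2 ≤ φ 1 ^ 2 :=
        pow_le_pow_left₀ (mul_nonneg (by positivity) (hφ _).1.le) hdecay1 2
      have hφ1 := hφ 1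
      have : 2 ^ (2 * k') * a ≤ 1 := by
        rw [ha]
        calc 2 ^ (2 * k') * φ (1 + k') ^ 2 = (2 ^ k' * φ (1 + k')) ^ 2 := by
              rw [mul_pow, h2k'2]
          _ ≤ φ 1 ^ 2 := hsq
          _ ≤ 1 := by nlinarith [hφ1.1, hφ1.2]
      rw [hx, ← one_div, le_div_iff₀ (by positivity)]
      linarith
    -- a < 1/4
    have h2k' : (2:ℝ) ≤ 2 ^ k' := by
      calc (2:ℝ) = 2 ^ 1 := by norm_num
        _ ≤ 2 ^ k' := pow_le_pow_right₀ one_le_two hk'1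
    have haq : a < 1/4 := by
      have hφ1 := hφ 1
      have h1 : 2 * φ (1 + k') ≤ 2 ^ k' * φ (1 + k') :=
        mul_le_mul_of_nonneg_right h2k' (hφ _).1.le
      have h2 : φ (1 + k') < 1/2 := by linarith [hφ1.2]
      rw [ha]
      nlinarith [(hφ (1 + k')).1]
    -- last factor rewrite
    have hLrw : π ^ 2 / 2 ^ (2 * (m + 3)) = π ^ 2 * y / 64 := by
      rw [hy, show (2:ℝ) ^ (2 * (m + 3)) = 2 ^ (2 * m) * 64 by
        rw [show 2 * (m + 3) = 2 * m + 6 by ring, pow_add]; norm_num]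
      have : ((2:ℝ) ^ (2 * m)) ≠ 0 := by positivity
      field_simp
    have hgoal : ((2:ℝ) ^ (2 * (k' + m)))⁻¹ = x * y := by
      rw [hx, hy, show 2 * (k' + m) = 2 * k' + 2 * m by ring, pow_add, mul_inv]
    rw [hLrw, hgoal]
    have hP : 0 ≤ ∏ i ∈ Finset.range j,
        (φ (1 + ∑ s ∈ Finset.range (i + 1), l s) ^ 2 + π ^ 2 / 2 ^ (2 * (l i + 3))) :=
      Finset.prod_nonneg fun i _ => by positivity
    have hL : 0 ≤ b + π ^ 2 * y / 64 := by positivity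
    have hpi2 : π ^ 2 ≤ 16 := by
      calc π ^ 2 ≤ 4 ^ 2 := pow_le_pow_left₀ hpi0.le hpi 2
        _ = 16 := by norm_num
    calc (∏ i ∈ Finset.range j,
          (φ (1 + ∑ s ∈ Finset.range (i + 1), l s) ^ 2 + π ^ 2 / 2 ^ (2 * (l i + 3))))
          * (b + π ^ 2 * y / 64)
        ≤ (x + a) * (b + π ^ 2 * y / 64) := mul_le_mul_of_nonneg_right IH hL
      _ ≤ x * y + b := arith_step a b x y (π ^ 2) hb0 hx0 hy0 (by positivity) hpi2 hbay hax haq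

theorem product_induction_fast_decay (φ : ℕ → ℝ) (hφ : ∀ n, 0 < φ n ∧ φ n < 1)
    (hanti : ∀ n, φ (n + 1) ≤ φ n) (hdouble : ∀ n, 2 * φ (n + 1) ≤ φ n)
    (j : ℕ) (hj : 1 ≤ j) (l : ℕ → ℕ) (hl : ∀ i < j, 1 ≤ l i)
    (k : ℕ) (hk : k = ∑ s ∈ Finset.range j, l s) :
    (∏ i ∈ Finset.range j,
        (φ (1 + ∑ s ∈ Finset.range (i + 1), l s) ^ 2 + π ^ 2 / 2 ^ (2 * (l i + 3)))
      ≤ ((2 : ℝ) ^ (2 * k))⁻¹ + φ (1 + k) ^ 2) ∧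
      ((2 : ℝ) ^ (2 * k))⁻¹ + φ (1 + k) ^ 2 ≤ (1 + φ 1 ^ 2) * ((2 : ℝ) ^ (2 * k))⁻¹ := by
  constructor
  · subst hk
    exact product_induction_aux φ hφ hdouble j hj l hl
  · have hdecay1 : 2 ^ k * φ (1 + k) ≤ φ 1 := by
      have := phi_decay_aux φ hdouble 1 k
      linarith
    have hsq : (2 ^ k * φ (1 + k)) ^ 2 ≤ φ 1 ^ 2 :=
      pow_le_pow_left₀ (mul_nonneg (by positivity) (hφ _).1.le) hdecay1 2
    have h2k : ((2:ℝ) ^ k) ^ 2 = 2 ^ (2 * k) := by rw [← pow_mul]; ring_nf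
    have h2k0 : (0:ℝ) < 2 ^ (2 * k) := by positivity
    have key : 2 ^ (2 * k) * φ (1 + k) ^ 2 ≤ φ 1 ^ 2 := by
      rw [← h2k, ← mul_pow]; exact hsq
    have : φ (1 + k) ^ 2 ≤ φ 1 ^ 2 * ((2:ℝ) ^ (2 * k))⁻¹ := by
      rw [← div_eq_mul_inv, le_div_iff₀ h2k0]; linarith
    have hexp : (1 + φ 1 ^ 2) * ((2:ℝ) ^ (2 * k))⁻¹
        = ((2:ℝ) ^ (2 * k))⁻¹ + φ 1 ^ 2 * ((2:ℝ) ^ (2 * k))⁻¹ := by ring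
    rw [hexp]
    linarith
end
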